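/- Let A be an abelian group, k, i, n natural numbers, and q_0, q_1: {0,1}^n → A. The i-arrow ⟨q_0, q_1⟩_i (equal to q_0(v) at (v,w) when w ≠ 1^i and q_1(v) when w = 1^i) belongs to C^{n+i}(D_k(A)) if and only if q_0 ∈ C^n(D_k(A)) and q_1 − q_0 ∈ C^n(D_{k−i}(A)). -/

import Mathlib

open Finset

/-- Embedding of the discrete cube `{0,1}^n` into `ℤ^n`. -/
def cubeEmb {n : ℕ} (v : Fin n → Bool) : Fin n → ℤ := fun i => if v i then 1 else 0

/-- A discrete-cube morphism: the restriction to `{0,1}^m` of an affine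
homomorphism `ℤ^m → ℤ^n`. -/
def IsCubeMorphism {m n : ℕ} (φ : (Fin m → Bool) → (Fin n → Bool)) : Prop :=
  ∃ (M : (Fin m → ℤ) →+ (Fin n → ℤ)) (t : Fin n → ℤ),
    ∀ v : Fin m → Bool, cubeEmb (φ v) = M (cubeEmb v) + t

/-- A face of `{0,1}^n` of codimension `c`: fix `c` coordinates. -/
def IsFaceOfCodim {n : ℕ} (F : Set (Fin n → Bool)) (c : ℕ) : Prop :=
  ∃ (I : Finset (Fin n)) (x : Fin n → Bool), I.card = c ∧
    F = {v : Fin n → Bool | ∀ i ∈ I, v i = x i}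

/-- An `m`-face map into `{0,1}^n`: an injective cube morphism whose image is
an `m`-dimensional face. -/
def IsFaceMap {m n : ℕ} (φ : (Fin m → Bool) → (Fin n → Bool)) : Prop :=
  IsCubeMorphism φ ∧ Function.Injective φ ∧ IsFaceOfCodim (Set.range φ) (n - m)

/-- The number of coordinates of `v` equal to `1`. -/
def weight {n : ℕ} (v : Fin n → Bool) : ℕ := (Finset.univ.filter fun i => v i = true).card

/-- A (pre)filtration on a group: a decreasing chain of subgroups with
`[G_i, G_j] ⊆ G_{i+j}`. -/
def IsGrpPreFiltration {G : Type*} [Group G] (Gf : ℕ → Subgroup G) : Prop :=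
  (∀ i, Gf (i + 1) ≤ Gf i) ∧
  (∀ i j : ℕ, ∀ x ∈ Gf i, ∀ y ∈ Gf j, x⁻¹ * y⁻¹ * x * y ∈ Gf (i + j))

open Classical in
/-- The face-group element `g^F`: equal to `g` on `F` and to the identity elsewhere. -/
noncomputable def faceEl {G : Type*} [Group G] {n : ℕ} (F : Set (Fin n → Bool)) (g : G) :
    (Fin n → Bool) → G :=
  fun v => if v ∈ F then g else 1

/-- The Host–Kra cube group `C^n(G_•)`: the subgroup of `G^{{0,1}^n}` generated by
the face groups. -/
noncomputable def hkCubes {G : Type*} [Group G] (Gf : ℕ → Subgroup G) (n : ℕ) :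
    Subgroup ((Fin n → Bool) → G) :=
  Subgroup.closure { f | ∃ (c : ℕ) (F : Set (Fin n → Bool)) (g : G),
    IsFaceOfCodim F c ∧ g ∈ Gf c ∧ f = faceEl F g }

/-- Restriction of a map on `{0,1}^{n+1}` to the lower face `{v : v_j = 0}`,
viewed as a map on `{0,1}^n`. -/
def lowerFaceRestr {X : Type*} {n : ℕ} (q : (Fin (n + 1) → Bool) → X) (j : Fin (n + 1)) :
    (Fin n → Bool) → X :=
  fun v => q (j.insertNth false v)

/-- An `(n+1)`-corner: every restriction to an `n`-face containing `0^{n+1}` is a cube. -/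
def IsNSCorner {X : Type*} (C : ∀ n, ((Fin n → Bool) → X) → Prop) (n : ℕ)
    (q' : (Fin (n + 1) → Bool) → X) : Prop :=
  ∀ j : Fin (n + 1), C n (lowerFaceRestr q' j)

/-- `q` is a completion of the corner `q'`. -/
def IsNSCompletion {X : Type*} (C : ∀ n, ((Fin n → Bool) → X) → Prop) (n : ℕ)
    (q' q : (Fin (n + 1) → Bool) → X) : Prop :=
  C (n + 1) q ∧ ∀ v : Fin (n + 1) → Bool, v ≠ (fun _ => true) → q v = q' v

/-- The nilspace axioms: composition, ergodicity and corner completion. -/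
def IsNilspace {X : Type*} (C : ∀ n, ((Fin n → Bool) → X) → Prop) : Prop :=
  (∀ (m n : ℕ) (φ : (Fin m → Bool) → (Fin n → Bool)), IsCubeMorphism φ →
      ∀ q, C n q → C m (q ∘ φ)) ∧
  (∀ q : (Fin 1 → Bool) → X, C 1 q) ∧
  (∀ n (q' : (Fin (n + 1) → Bool) → X), IsNSCorner C n q' → ∃ q, IsNSCompletion C n q' q)

/-- A `k`-step nilspace: a nilspace in which every `(k+1)`-corner has a unique
completion. -/
def IsKStepNilspace {X : Type*} (C : ∀ n, ((Fin n → Bool) → X) → Prop) (k : ℕ) : Prop :=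
  IsNilspace C ∧
  ∀ q' : (Fin (k + 1) → Bool) → X, IsNSCorner C k q' → ∃! q, IsNSCompletion C k q' q

/-- The Gray-code alternating product `σ_n`. -/
def graySigma {G : Type*} [Group G] : (n : ℕ) → ((Fin n → Bool) → G) → G
  | 0, g => g (fun i => i.elim0)
  | n + 1, g => (graySigma n (fun v => g (Fin.snoc v true)))⁻¹ *
      graySigma n (fun v => g (Fin.snoc v false))

/-- The difference operator `∂_h g (x) = g(x)⁻¹ g(xh)`. -/
def mulDiff {H G : Type*} [Group H] [Group G] (h : H) (g : H → G) : H → G :=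
  fun x => (g x)⁻¹ * g (x * h)

/-- `g : H → G` is a polynomial map adapted to the filtrations `H_•, G_•`. -/
def IsPolyMap {H G : Type*} [Group H] [Group G] (Hf : ℕ → Subgroup H)
    (Gf : ℕ → Subgroup G) (g : H → G) : Prop :=
  ∀ (n : ℕ) (d : Fin n → ℕ) (h : Fin n → H), (∀ j, h j ∈ Hf (d j)) →
    ∀ x : H, ((List.ofFn h).foldr mulDiff g) x ∈ Gf (∑ j, d j)

/-- The `k`-arrow `⟨q_0, q_1⟩_k : {0,1}^{n+k} → X`. -/
def arrowMap {X : Type*} {n k : ℕ} (q0 q1 : (Fin n → Bool) → X) :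
    (Fin (n + k) → Bool) → X :=
  fun v =>
    if ∀ j : Fin k, v (Fin.natAdd n j) = true
    then q1 (fun i => v (Fin.castAdd k i))
    else q0 (fun i => v (Fin.castAdd k i))

/-- The cube set `C^n(D_{d-1}(A))` of the degree-`(d-1)` structure on the abelian
group `A`: maps whose alternating sum over every `d`-face vanishes.  (Thus `d = k+1`
gives the degree-`k` structure, and `d = 0` gives the trivial degree-`(-1)`
structure.) -/
def dkCube (A : Type*) [AddCommGroup A] (d n : ℕ) (q : (Fin n → Bool) → A) : Prop :=
  ∀ φ : (Fin d → Bool) → (Fin n → Bool), IsFaceMap φ →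
    ∑ v : Fin d → Bool, ((-1 : ℤ) ^ weight v) • q (φ v) = 0


/-!
The cube condition of `D_{d-1}(A)` only sees the alternating sums of `q` over `d`-dimensional
coordinate faces: every coordinate of an injective affine map of cubes is constant or
`v ↦ ε xor v_j`, so a face map parametrises a coordinate face up to a permutation and reflection
of coordinates, which only changes the sign of the alternating sum. A face sum is the difference
of two face sums of one dimension less, so vanishing in dimension `d` implies vanishing in every
dimension `≥ d`.

A coordinate face of `{0,1}^{n+i}` is a product of faces with directions `J_f ⊆ [n]` and
`J_a ⊆ [i]`, and the face sum of the arrow over it is the `J_a`-face sum of the function sending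
`1^i` to the `J_f`-face sum of `q_1` and every other vertex to that of `q_0`. If `q_1 - q_0` has
vanishing face sums in dimension `k+1-i ≤ |J_f|` this function is constant, and constants have
vanishing face sums over nonempty faces. Conversely, `J_a = ∅` with base point `0^i` recovers the
face sums of `q_0`, and base point `1^i` with `|J_a| = k+1-|J_f| ≥ 1` recovers `±` those of
`q_1 - q_0`.
-/

open Function

section FaceSum

variable {ι A : Type*} [Fintype ι] [DecidableEq ι] [AddCommGroup A]

def cubeFace (J : Finset ι) (x : ι → Bool) : Finset (ι → Bool) :=
  univ.filter fun w => ∀ r ∉ J, w r = x r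

def faceSum (q : (ι → Bool) → A) (J : Finset ι) (x : ι → Bool) : A :=
  ∑ w ∈ cubeFace J x, (-1 : ℤ) ^ #(J.filter (w · = true)) • q w

def FaceSumsVanish (d : ℕ) (q : (ι → Bool) → A) : Prop :=
  ∀ (J : Finset ι) (x : ι → Bool), #J = d → faceSum q J x = 0

@[simp]
lemma mem_cubeFace {J : Finset ι} {x w : ι → Bool} :
    w ∈ cubeFace J x ↔ ∀ r ∉ J, w r = x r := by
  simp [cubeFace]

lemma mem_cubeFace_update {J : Finset ι} {a : ι} (ha : a ∉ J) {x w : ι → Bool} {b : Bool} :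
    w ∈ cubeFace J (update x a b) ↔ w ∈ cubeFace (insert a J) x ∧ w a = b := by
  simp only [mem_cubeFace, mem_insert, not_or]
  rw [forall_update_iff x (fun r y => r ∉ J → w r = y)]
  simp only [ha, not_false_eq_true, forall_const]
  constructor
  · exact fun ⟨hb, h⟩ => ⟨fun r ⟨hra, hrJ⟩ => h r hra hrJ, hb⟩
  · exact fun ⟨h, hb⟩ => ⟨hb, fun r hra hrJ => h r ⟨hra, hrJ⟩⟩

lemma faceSum_empty (q : (ι → Bool) → A) (x : ι → Bool) : faceSum q ∅ x = q x := by
  have hface : cubeFace ∅ x = {x} := by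
    ext w
    simp [funext_iff]
  simp [faceSum, hface]

lemma faceSum_insert (q : (ι → Bool) → A) {J : Finset ι} {a : ι} (ha : a ∉ J)
    (x : ι → Bool) :
    faceSum q (insert a J) x =
      faceSum q J (update x a false) - faceSum q J (update x a true) := by
  have hface (b : Bool) :
      cubeFace J (update x a b) = (cubeFace (insert a J) x).filter (· a = b) := by
    ext w
    rw [mem_cubeFace_update ha, mem_filter]
  have hsign (w : ι → Bool) : (-1 : ℤ) ^ #((insert a J).filter (w · = true)) =
      if w a = true then -(-1) ^ #(J.filter (w · = true))
      else (-1) ^ #(J.filter (w · = true)) := by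
    rw [filter_insert]
    split_ifs with h
    · rw [card_insert_of_notMem (by simp [ha]), pow_succ, mul_neg_one]
    · rfl
  simp only [faceSum, hsign, ite_smul, neg_smul, sum_ite, hface, sum_neg_distrib,
    Bool.not_eq_true]
  abel

lemma faceSum_add (q q' : (ι → Bool) → A) (J : Finset ι) (x : ι → Bool) :
    faceSum (fun w => q w + q' w) J x = faceSum q J x + faceSum q' J x := by
  simp only [faceSum, smul_add, sum_add_distrib]

lemma faceSum_sub (q q' : (ι → Bool) → A) (J : Finset ι) (x : ι → Bool) :
    faceSum (fun w => q w - q' w) J x = faceSum q J x - faceSum q' J x := by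
  simp only [faceSum, smul_sub, sum_sub_distrib]

lemma faceSum_const (c : A) (J : Finset ι) (x : ι → Bool) :
    faceSum (fun _ => c) J x = if J = ∅ then c else 0 := by
  induction J using Finset.induction_on generalizing x with
  | empty => simp [faceSum_empty]
  | insert a J ha ih =>
    rw [faceSum_insert _ ha, ih, ih, sub_self, if_neg (insert_ne_empty a J)]

lemma faceSum_ite_eq (z : A) (J : Finset ι) (x : ι → Bool) :
    faceSum (fun w => if w = x then z else 0) J x =
      (-1 : ℤ) ^ #(J.filter (x · = true)) • z := by
  simp only [faceSum, smul_ite, smul_zero]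
  rw [sum_ite_eq', if_pos (by simp)]

lemma FaceSumsVanish.faceSum_eq_zero {d : ℕ} {q : (ι → Bool) → A} (h : FaceSumsVanish d q)
    {J : Finset ι} (hJ : d ≤ #J) (x : ι → Bool) : faceSum q J x = 0 := by
  induction J using Finset.induction_on generalizing x with
  | empty => exact h ∅ x (by simpa [eq_comm] using hJ)
  | insert a J ha ih =>
    rw [card_insert_of_notMem ha] at hJ
    rcases hJ.lt_or_eq with hlt | heq
    · rw [faceSum_insert q ha, ih (by omega), ih (by omega), sub_zero]
    · exact h _ x (by rw [card_insert_of_notMem ha, heq])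

end FaceSum

section FaceMap

variable {A : Type*} [AddCommGroup A] {d n : ℕ}

lemma eq_const_or_eq_xor_of_affine {f : (Fin d → Bool) → Bool} (a : Fin d → ℤ) (t : ℤ)
    (h : ∀ v, (if f v then 1 else 0 : ℤ) = ∑ j, cubeEmb v j * a j + t) :
    (∀ v, f v = f (fun _ => false)) ∨ ∃ j, ∀ v, f v = xor (f (fun _ => false)) (v j) := by
  -- testing on indicator vectors of sets of size ≤ 2 forces at most one nonzero coefficient
  have h01 (s : Finset (Fin d)) : ∑ j ∈ s, a j + t = 0 ∨ ∑ j ∈ s, a j + t = 1 := by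
    have hs := h (fun j => decide (j ∈ s))
    simp only [cubeEmb, decide_eq_true_eq, ite_mul, one_mul, zero_mul, sum_ite_mem,
      univ_inter] at hs
    rw [← hs]
    split_ifs <;> simp
  have h₀ := h (fun _ => false)
  simp only [cubeEmb, Bool.false_eq_true, if_false, zero_mul, sum_const_zero, zero_add] at h₀
  by_cases ha : ∀ j, a j = 0
  · left
    intro v
    have hv := h v
    simp only [ha, mul_zero, sum_const_zero, zero_add, ← h₀] at hv
    revert hv
    cases f v <;> cases f (fun _ => false) <;> simp
  · right
    push Not at ha
    obtain ⟨j₀, hj₀⟩ := ha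
    have hzero (j : Fin d) (hj : j ≠ j₀) : a j = 0 := by
      have h1 := h01 {j₀}
      have h2 := h01 {j}
      have h3 := h01 {j, j₀}
      rw [sum_pair hj] at h3
      simp only [sum_singleton] at h1 h2
      have := h01 ∅
      simp only [sum_empty, zero_add] at this
      omega
    refine ⟨j₀, fun v => ?_⟩
    have hv := h v
    rw [sum_eq_single j₀ (fun j _ hj => by rw [hzero j hj, mul_zero]) (by simp)] at hv
    have h1 := h01 {j₀}
    rw [sum_singleton] at h1
    simp only [cubeEmb, ite_mul, one_mul, zero_mul] at hv
    revert hv h₀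
    cases f v <;> cases f (fun _ => false) <;> cases v j₀ <;> simp <;> omega

lemma IsCubeMorphism.apply_eq_const_or_eq_xor {φ : (Fin d → Bool) → Fin n → Bool}
    (hφ : IsCubeMorphism φ) (r : Fin n) :
    (∀ v, φ v r = φ (fun _ => false) r) ∨
      ∃ j, ∀ v, φ v r = xor (φ (fun _ => false) r) (v j) := by
  obtain ⟨M, t, hM⟩ := hφ
  refine eq_const_or_eq_xor_of_affine (f := (φ · r))
    (fun j => M (fun k => if j = k then 1 else 0) r) (t r) fun v => ?_
  have hv := congrFun (hM v) r
  have hlin := M.toIntLinearMap.pi_apply_eq_sum_univ (cubeEmb v)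
  rw [AddMonoidHom.coe_toIntLinearMap] at hlin
  rw [Pi.add_apply, hlin] at hv
  simp only [Finset.sum_apply, Pi.smul_apply, smul_eq_mul] at hv
  exact hv

lemma IsFaceMap.exists_coordinates {φ : (Fin d → Bool) → Fin n → Bool} (hφ : IsFaceMap φ) :
    ∃ τ : Fin d → Fin n, Injective τ ∧
      (∀ j v, φ v (τ j) = xor (φ (fun _ => false) (τ j)) (v j)) ∧
      ∀ w, w ∈ cubeFace (univ.image τ) (φ (fun _ => false)) ↔ w ∈ Set.range φ := by
  obtain ⟨hcube, hinj, I, x, hI, hrange⟩ := hφ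
  have hconst (v : Fin d → Bool) (r : Fin n) (hr : r ∈ I) : φ v r = x r := by
    have hv : φ v ∈ Set.range φ := ⟨v, rfl⟩
    rw [hrange] at hv
    exact hv r hr
  have hcoord (j : Fin d) : ∃ r ∉ I, ∀ v, φ v r = xor (φ (fun _ => false) r) (v j) := by
    obtain ⟨r, hr⟩ : ∃ r, φ (fun k => decide (k = j)) r ≠ φ (fun _ => false) r := by
      by_contra! h
      simpa using congrFun (hinj (funext h)) j
    rcases hcube.apply_eq_const_or_eq_xor r with hc | ⟨j', hj'⟩
    · exact absurd (hc _) hr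
    obtain rfl : j' = j := by
      by_contra hne
      exact hr (by rw [hj']; simp [hne])
    exact ⟨r, fun hrI => hr (by rw [hconst _ r hrI, hconst _ r hrI]), hj'⟩
  choose τ hτI hτ using hcoord
  have hτinj : Injective τ := by
    intro j j' h
    by_contra hne
    have h₁ := hτ j (fun k => decide (k = j))
    rw [h, hτ j'] at h₁
    simp [Ne.symm hne] at h₁
  -- the `d` distinct coordinates `τ j` are free, and the face has only `d` free coordinates
  have himage : univ.image τ = Iᶜ := by
    refine eq_of_subset_of_card_le (fun r hr => ?_) ?_
    · obtain ⟨j, -, rfl⟩ := mem_image.mp hr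
      exact mem_compl.mpr (hτI j)
    · rw [card_compl, hI, card_image_of_injective _ hτinj, card_univ, Fintype.card_fin,
        Fintype.card_fin]
      omega
  refine ⟨τ, hτinj, hτ, fun w => ?_⟩
  rw [himage, hrange, mem_cubeFace]
  simp only [mem_compl, not_not]
  exact forall₂_congr fun r hr => by rw [hconst _ r hr]

lemma neg_one_pow_card_filter {α : Type*} (s : Finset α) (p : α → Bool) :
    (-1 : ℤ) ^ #(s.filter (p · = true)) = ∏ r ∈ s, if p r then -1 else 1 := by
  rw [← prod_const, prod_filter]

lemma neg_one_pow_weight_eq_mul {ι : Type*} [DecidableEq ι]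
    {φ : (Fin d → Bool) → ι → Bool} {τ : Fin d → ι} (hτ : Injective τ)
    (ε : Fin d → Bool) (hrow : ∀ j v, φ v (τ j) = xor (ε j) (v j)) (v : Fin d → Bool) :
    (-1 : ℤ) ^ weight v =
      (-1) ^ weight ε * (-1) ^ #((univ.image τ).filter (φ v · = true)) := by
  simp only [weight, neg_one_pow_card_filter, prod_image hτ.injOn, hrow, ← prod_mul_distrib]
  refine prod_congr rfl fun j _ => ?_
  cases ε j <;> cases v j <;> rfl

lemma sum_weight_smul_eq_smul_faceSum {ι : Type*} [Fintype ι] [DecidableEq ι]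
    {φ : (Fin d → Bool) → ι → Bool} (hφ : Injective φ) {J : Finset ι} {x : ι → Bool}
    (hrange : ∀ w, w ∈ cubeFace J x ↔ w ∈ Set.range φ) (c : ℤ)
    (hsign : ∀ v, (-1 : ℤ) ^ weight v = c * (-1) ^ #(J.filter (φ v · = true)))
    (q : (ι → Bool) → A) :
    ∑ v, (-1 : ℤ) ^ weight v • q (φ v) = c • faceSum q J x := by
  have himage : cubeFace J x = univ.image φ := by
    ext w
    rw [hrange, mem_image]
    simp
  rw [faceSum, himage, sum_image hφ.injOn, smul_sum]
  simp only [hsign, mul_smul]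

lemma IsFaceMap.exists_sum_eq_smul_faceSum {φ : (Fin d → Bool) → Fin n → Bool}
    (hφ : IsFaceMap φ) :
    ∃ (J : Finset (Fin n)) (x : Fin n → Bool) (c : ℤ), #J = d ∧
      ∀ q : (Fin n → Bool) → A,
        ∑ v, (-1 : ℤ) ^ weight v • q (φ v) = c • faceSum q J x := by
  obtain ⟨τ, hτ, hrow, hrange⟩ := hφ.exists_coordinates
  exact ⟨_, _, _, by simp [card_image_of_injective _ hτ],
    sum_weight_smul_eq_smul_faceSum hφ.2.1 hrange _ (neg_one_pow_weight_eq_mul hτ _ hrow)⟩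

lemma mem_range_extend_iff {τ : Fin d → Fin n} (hτ : Injective τ) (x w : Fin n → Bool) :
    w ∈ Set.range (fun v : Fin d → Bool => extend τ v x) ↔
      w ∈ cubeFace (univ.image τ) x := by
  simp only [Set.mem_range, mem_cubeFace, mem_image, mem_univ, true_and]
  constructor
  · rintro ⟨v, rfl⟩ r hr
    exact extend_apply' _ _ _ hr
  · intro hw
    refine ⟨w ∘ τ, funext fun r => ?_⟩
    by_cases hr : ∃ j, τ j = r
    · obtain ⟨j, rfl⟩ := hr
      exact hτ.extend_apply _ _ _
    · rw [extend_apply' _ _ _ hr, hw r hr]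

lemma isFaceMap_extend {τ : Fin d → Fin n} (hτ : Injective τ) (x : Fin n → Bool) :
    IsFaceMap fun v : Fin d → Bool => extend τ v x := by
  refine ⟨⟨ExtendByZero.hom ℤ τ, extend τ 0 (cubeEmb x), fun v => ?_⟩,
    fun v v' h => funext fun j => by simpa [hτ.extend_apply] using congrFun h (τ j),
    (univ.image τ)ᶜ, x, ?_, ?_⟩
  · funext r
    by_cases hr : ∃ j, τ j = r
    · obtain ⟨j, rfl⟩ := hr
      simp [cubeEmb, hτ.extend_apply]
    · simp [cubeEmb, extend_apply' _ _ _ hr]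
  · simp [card_compl, card_image_of_injective _ hτ]
  · ext w
    rw [mem_range_extend_iff hτ]
    simp

lemma exists_isFaceMap_sum_eq_faceSum {J : Finset (Fin n)} (hJ : #J = d) (x : Fin n → Bool) :
    ∃ φ : (Fin d → Bool) → Fin n → Bool, IsFaceMap φ ∧
      ∀ q : (Fin n → Bool) → A,
        ∑ v, (-1 : ℤ) ^ weight v • q (φ v) = faceSum q J x := by
  set τ := J.orderEmbOfFin hJ
  have hφ := isFaceMap_extend τ.injective x
  refine ⟨_, hφ, fun q => ?_⟩
  have hrow (j : Fin d) (v : Fin d → Bool) : extend τ v x (τ j) = xor false (v j) := by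
    rw [τ.injective.extend_apply, Bool.false_xor]
  rw [← one_smul ℤ (faceSum q J x), ← image_orderEmbOfFin_univ J hJ]
  refine sum_weight_smul_eq_smul_faceSum hφ.2.1
    (fun w => (mem_range_extend_iff τ.injective x w).symm) 1 (fun v => ?_) q
  rw [neg_one_pow_weight_eq_mul τ.injective _ hrow v]
  simp [weight]

theorem dkCube_iff_faceSumsVanish (q : (Fin n → Bool) → A) :
    dkCube A d n q ↔ FaceSumsVanish d q := by
  refine ⟨fun h J x hJ => ?_, fun h φ hφ => ?_⟩
  · obtain ⟨φ, hφ, hsum⟩ := exists_isFaceMap_sum_eq_faceSum (A := A) hJ x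
    rw [← hsum q]
    exact h φ hφ
  · obtain ⟨J, x, c, hJ, hsum⟩ := hφ.exists_sum_eq_smul_faceSum (A := A)
    rw [hsum, h J x hJ, smul_zero]

end FaceMap

section Arrow

variable {n i : ℕ}

lemma Fin.castAdd_ne_natAdd (j : Fin n) (a : Fin i) : Fin.castAdd i j ≠ Fin.natAdd n a := by
  simp only [ne_eq, Fin.ext_iff, Fin.val_castAdd, Fin.val_natAdd]
  omega

lemma Fin.append_update_castAdd {α : Type*} (xf : Fin n → α) (xa : Fin i → α) (a : Fin n)
    (b : α) :
    update (Fin.append xf xa) (Fin.castAdd i a) b = Fin.append (update xf a b) xa := by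
  ext r
  refine Fin.addCases (fun j => ?_) (fun j => ?_) r
  · by_cases h : j = a
    · subst h; simp
    · simp [update_of_ne h, Fin.castAdd_injective _ _ |>.ne h]
  · simp [update_of_ne (Fin.castAdd_ne_natAdd a j).symm]

lemma Fin.append_update_natAdd {α : Type*} (xf : Fin n → α) (xa : Fin i → α) (a : Fin i)
    (b : α) :
    update (Fin.append xf xa) (Fin.natAdd n a) b = Fin.append xf (update xa a b) := by
  ext r
  refine Fin.addCases (fun j => ?_) (fun j => ?_) r
  · simp [update_of_ne (Fin.castAdd_ne_natAdd j a)]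
  · by_cases h : j = a
    · subst h; simp
    · simp [update_of_ne h, Fin.natAdd_injective _ _ |>.ne h]

lemma card_map_castAdd_union_map_natAdd (Jf : Finset (Fin n)) (Ja : Finset (Fin i)) :
    #(Jf.map (Fin.castAddEmb i) ∪ Ja.map (Fin.natAddEmb n)) = #Jf + #Ja := by
  rw [card_union_of_disjoint, card_map, card_map]
  simp [disjoint_left, (Fin.castAdd_ne_natAdd _ _).symm]

lemma map_castAdd_union_map_natAdd_filter (J : Finset (Fin (n + i))) :
    (univ.filter (Fin.castAdd i · ∈ J)).map (Fin.castAddEmb i) ∪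
      (univ.filter (Fin.natAdd n · ∈ J)).map (Fin.natAddEmb n) = J := by
  ext r
  refine Fin.addCases (fun j => ?_) (fun a => ?_) r <;>
    simp [Fin.castAdd_ne_natAdd, (Fin.castAdd_ne_natAdd _ _).symm]

variable {A : Type*} [AddCommGroup A]

lemma faceSum_map_castAdd (Q : (Fin n → Bool) → (Fin i → Bool) → A) (Jf : Finset (Fin n))
    (xf : Fin n → Bool) (xa : Fin i → Bool) :
    faceSum (fun w => Q (fun j => w (Fin.castAdd i j)) (fun a => w (Fin.natAdd n a)))
        (Jf.map (Fin.castAddEmb i)) (Fin.append xf xa) = faceSum (fun vf => Q vf xa) Jf xf := by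
  induction Jf using Finset.induction_on generalizing xf with
  | empty => simp [faceSum_empty]
  | insert a Jf ha ih =>
    rw [map_insert, faceSum_insert _ (by simpa using ha), faceSum_insert _ ha]
    simp only [Fin.castAddEmb_apply, Fin.append_update_castAdd, ih]

lemma faceSum_append (Q : (Fin n → Bool) → (Fin i → Bool) → A) (Jf : Finset (Fin n))
    (Ja : Finset (Fin i)) (xf : Fin n → Bool) (xa : Fin i → Bool) :
    faceSum (fun w => Q (fun j => w (Fin.castAdd i j)) (fun a => w (Fin.natAdd n a)))
        (Jf.map (Fin.castAddEmb i) ∪ Ja.map (Fin.natAddEmb n)) (Fin.append xf xa) =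
      faceSum (fun va => faceSum (fun vf => Q vf va) Jf xf) Ja xa := by
  induction Ja using Finset.induction_on generalizing xa with
  | empty => simp [faceSum_empty, faceSum_map_castAdd]
  | insert a Ja ha ih =>
    have hnot : Fin.natAdd n a ∉ Jf.map (Fin.castAddEmb i) ∪ Ja.map (Fin.natAddEmb n) := by
      simp [ha, Fin.castAdd_ne_natAdd, Fin.natAdd_inj]
    rw [map_insert, union_insert, Fin.natAddEmb_apply, faceSum_insert _ hnot,
      faceSum_insert _ ha]
    simp only [Fin.append_update_natAdd, ih]

lemma faceSum_arrowMap (q0 q1 : (Fin n → Bool) → A) (Jf : Finset (Fin n))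
    (Ja : Finset (Fin i)) (xf : Fin n → Bool) (xa : Fin i → Bool) :
    faceSum (arrowMap q0 q1) (Jf.map (Fin.castAddEmb i) ∪ Ja.map (Fin.natAddEmb n))
        (Fin.append xf xa) =
      faceSum (fun va => faceSum (if ∀ a, va a = true then q1 else q0) Jf xf) Ja xa := by
  convert faceSum_append (fun vf va => if ∀ a, va a = true then q1 vf else q0 vf) Jf Ja xf xa
    using 3 with w va
  · rfl
  · split_ifs <;> rfl

variable {q0 q1 : (Fin n → Bool) → A}

lemma FaceSumsVanish.of_arrowMap_left {k : ℕ} (hi : 1 ≤ i)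
    (h : FaceSumsVanish (k + 1) (arrowMap (k := i) q0 q1)) : FaceSumsVanish (k + 1) q0 := by
  intro J x hJ
  have hfalse : ¬∀ a : Fin i, false = true := fun h => Bool.false_ne_true (h ⟨0, hi⟩)
  have := h (J.map (Fin.castAddEmb i) ∪ (∅ : Finset (Fin i)).map (Fin.natAddEmb n))
    (Fin.append x fun _ => false) (by simpa using hJ)
  rwa [faceSum_arrowMap, faceSum_empty, if_neg hfalse] at this

lemma FaceSumsVanish.of_arrowMap_sub {k : ℕ} (hi : 1 ≤ i)
    (h : FaceSumsVanish (k + 1) (arrowMap (k := i) q0 q1)) :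
    FaceSumsVanish (k + 1 - i) (fun v => q1 v - q0 v) := by
  intro J x hJ
  obtain ⟨S, -, hS⟩ := exists_subset_card_eq (s := (univ : Finset (Fin i))) (n := k + 1 - #J)
    (by simp only [card_univ, Fintype.card_fin]; omega)
  have hSne : S ≠ ∅ := by
    rintro rfl
    simp only [card_empty] at hS
    omega
  have hinner : (fun va : Fin i → Bool => faceSum (if ∀ a, va a = true then q1 else q0) J x) =
      fun va => faceSum q0 J x +
        if va = (fun _ => true) then faceSum (fun v => q1 v - q0 v) J x else 0 := by
    funext va
    by_cases hva : ∀ a, va a = true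
    · rw [if_pos hva, if_pos (funext hva), faceSum_sub]
      abel
    · rw [if_neg hva, if_neg (fun h => hva (by simp [h])), add_zero]
  have := h (J.map (Fin.castAddEmb i) ∪ S.map (Fin.natAddEmb n)) (Fin.append x fun _ => true)
    (by rw [card_map_castAdd_union_map_natAdd, hS]; omega)
  rw [faceSum_arrowMap, hinner, faceSum_add, faceSum_const, if_neg hSne, zero_add,
    faceSum_ite_eq, filter_true_of_mem fun _ _ => rfl] at this
  rcases neg_one_pow_eq_or ℤ #S with h1 | h1 <;> rw [h1] at this <;> simpa using this

lemma faceSumsVanish_arrowMap {k : ℕ} (h0 : FaceSumsVanish (k + 1) q0)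
    (h1 : FaceSumsVanish (k + 1 - i) (fun v => q1 v - q0 v)) :
    FaceSumsVanish (k + 1) (arrowMap (k := i) q0 q1) := by
  intro J x hJ
  obtain ⟨xf, xa, rfl⟩ : ∃ xf xa, x = Fin.append xf xa :=
    ⟨_, _, Fin.append_castAdd_natAdd.symm⟩
  obtain ⟨Jf, Ja, rfl⟩ : ∃ (Jf : Finset (Fin n)) (Ja : Finset (Fin i)),
      J = Jf.map (Fin.castAddEmb i) ∪ Ja.map (Fin.natAddEmb n) :=
    ⟨_, _, (map_castAdd_union_map_natAdd_filter J).symm⟩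
  rw [card_map_castAdd_union_map_natAdd] at hJ
  have hq : faceSum q1 Jf xf = faceSum q0 Jf xf := by
    refine sub_eq_zero.mp ?_
    rw [← faceSum_sub]
    refine h1.faceSum_eq_zero ?_ xf
    have : #Ja ≤ i := by simpa using card_le_univ Ja
    omega
  have hinner : (fun va : Fin i → Bool => faceSum (if ∀ a, va a = true then q1 else q0) Jf xf) =
      fun _ => faceSum q0 Jf xf := by
    funext va
    split_ifs
    exacts [hq, rfl]
  rw [faceSum_arrowMap, hinner, faceSum_const]
  split_ifs with hJa
  · rw [hJa, card_empty, add_zero] at hJ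
    exact h0 Jf xf hJ
  · rfl

end Arrow

theorem stmt19 {A : Type*} [AddCommGroup A] (k i n : ℕ) (hi : 1 ≤ i)
    (q0 q1 : (Fin n → Bool) → A) :
    dkCube A (k + 1) (n + i) (arrowMap q0 q1) ↔
      dkCube A (k + 1) n q0 ∧ dkCube A (k + 1 - i) n (fun v => q1 v - q0 v) := by
  simp only [dkCube_iff_faceSumsVanish]
  exact ⟨fun h => ⟨h.of_arrowMap_left hi, h.of_arrowMap_sub hi⟩,
    fun ⟨h0, h1⟩ => faceSumsVanish_arrowMap h0 h1⟩
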